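/- For all positive reals ξ, ψ, ξ₀, ψ₀, the inequality ln(1 + ξ/ψ) ≥ ln(1 + ξ₀/ψ₀) + (ξ₀/ψ₀)/(1 + ξ₀/ψ₀) · (2 − ξ₀/ξ − ψ/ψ₀) holds. -/

import Mathlib

lemma sca_log_key (c : ℝ) (hc : 0 < c) (s : ℝ) (hs : 0 < s) :
    Real.log (1 + c / s ^ 2) ≥ Real.log (1 + c) + 2 * (c / (1 + c)) * (1 - s) := by
  have h1c : (0:ℝ) < 1 + c := by linarith
  set t : ℝ := c / (1 + c) with ht
  set g : ℝ → ℝ := fun x => Real.log (x ^ 2 + c) - 2 * Real.log x + 2 * t * x with hg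
  have hderiv : ∀ x : ℝ, 0 < x →
      HasDerivAt g (2 * x / (x ^ 2 + c) - 2 * x⁻¹ + 2 * t) x := by
    intro x hx
    have hx2 : x ^ 2 + c ≠ 0 := by positivity
    have h1 : HasDerivAt (fun x : ℝ => x ^ 2 + c) (2 * x) x := by
      simpa using (hasDerivAt_pow 2 x).add_const c
    have h2 := h1.log hx2
    have h3 := (Real.hasDerivAt_log hx.ne').const_mul (2:ℝ)
    have h4 : HasDerivAt (fun x : ℝ => 2 * t * x) (2 * t) x := by
      simpa using (hasDerivAt_id x).const_mul (2 * t)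
    exact (h2.sub h3).add h4
  have hfact : ∀ x : ℝ, 0 < x →
      2 * x / (x ^ 2 + c) - 2 * x⁻¹ + 2 * t =
        2 * c * (x - 1) * (x ^ 2 + x + 1 + c) / (x * (x ^ 2 + c) * (1 + c)) := by
    intro x hx
    rw [ht]
    field_simp
    ring
  have hDpos : ∀ x : ℝ, 1 < x → 0 < 2 * x / (x ^ 2 + c) - 2 * x⁻¹ + 2 * t := by
    intro x hx
    have hx0 : 0 < x := by linarith
    rw [hfact x hx0]
    apply div_pos
    · have : 0 < x - 1 := by linarith
      positivity
    · positivity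
  have hDneg : ∀ x : ℝ, 0 < x → x < 1 → 2 * x / (x ^ 2 + c) - 2 * x⁻¹ + 2 * t < 0 := by
    intro x hx0 hx1
    rw [hfact x hx0]
    apply div_neg_of_neg_of_pos
    · have h1 : 0 < 1 - x := by linarith
      nlinarith [sq_nonneg x, mul_pos hc h1]
    · positivity
  have hcont : ∀ x : ℝ, 0 < x → ContinuousAt g x := fun x hx =>
    ((hderiv x hx).differentiableAt).continuousAt
  have hmono : StrictMonoOn g (Set.Ici 1) := by
    apply strictMonoOn_of_deriv_pos (convex_Ici 1)
    · intro x hx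
      exact (hcont x (lt_of_lt_of_le one_pos hx)).continuousWithinAt
    · intro x hx
      rw [interior_Ici] at hx
      rw [(hderiv x (by linarith [Set.mem_Ioi.mp hx])).deriv]
      exact hDpos x hx
  have hanti : StrictAntiOn g (Set.Ioc 0 1) := by
    apply strictAntiOn_of_deriv_neg (convex_Ioc 0 1)
    · intro x hx
      exact (hcont x hx.1).continuousWithinAt
    · intro x hx
      rw [interior_Ioc] at hx
      rw [(hderiv x hx.1).deriv]
      exact hDneg x hx.1 hx.2
  have hge : g 1 ≤ g s := by
    rcases le_or_gt 1 s with h | h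
    · rcases eq_or_lt_of_le h with h' | h'
      · rw [← h']
      · exact (hmono (Set.self_mem_Ici) (Set.mem_Ici.mpr h) h').le
    · exact (hanti ⟨hs, h.le⟩ ⟨one_pos, le_rfl⟩ h).le
  have hlog : Real.log (1 + c / s ^ 2) = Real.log (s ^ 2 + c) - 2 * Real.log s := by
    rw [show 1 + c / s ^ 2 = (s ^ 2 + c) / s ^ 2 by field_simp]
    rw [Real.log_div (by positivity) (by positivity), Real.log_pow]
    push_cast; ring
  have h1 : g 1 = Real.log (1 + c) + 2 * t := by
    simp [hg, add_comm c 1]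
  have hsv : g s = Real.log (s ^ 2 + c) - 2 * Real.log s + 2 * t * s := rfl
  rw [hlog]
  rw [h1, hsv] at hge
  linarith

theorem sca_log_lower_bound (ξ ψ ξ₀ ψ₀ : ℝ) (hξ : 0 < ξ) (hψ : 0 < ψ)
    (hξ₀ : 0 < ξ₀) (hψ₀ : 0 < ψ₀) :
    Real.log (1 + ξ / ψ) ≥
      Real.log (1 + ξ₀ / ψ₀) +
        (ξ₀ / ψ₀) / (1 + ξ₀ / ψ₀) * (2 - ξ₀ / ξ - ψ / ψ₀) := by
  have hc : 0 < ξ₀ / ψ₀ := by positivity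
  have ha : 0 < ξ₀ / ξ := by positivity
  have hb : 0 < ψ / ψ₀ := by positivity
  set s : ℝ := Real.sqrt ((ξ₀ / ξ) * (ψ / ψ₀)) with hsdef
  have hs : 0 < s := Real.sqrt_pos.mpr (by positivity)
  have hs2 : s ^ 2 = (ξ₀ / ξ) * (ψ / ψ₀) := Real.sq_sqrt (by positivity)
  have hxy : ξ / ψ = (ξ₀ / ψ₀) / s ^ 2 := by
    rw [hs2]; field_simp
  have hamgm : 2 - ξ₀ / ξ - ψ / ψ₀ ≤ 2 * (1 - s) := by
    have hsm : s = Real.sqrt (ξ₀ / ξ) * Real.sqrt (ψ / ψ₀) := by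
      rw [hsdef, Real.sqrt_mul ha.le]
    nlinarith [sq_nonneg (Real.sqrt (ξ₀ / ξ) - Real.sqrt (ψ / ψ₀)),
      Real.sq_sqrt ha.le, Real.sq_sqrt hb.le,
      Real.sqrt_nonneg (ξ₀ / ξ), Real.sqrt_nonneg (ψ / ψ₀)]
  have hkey := sca_log_key (ξ₀ / ψ₀) hc s hs
  have ht : 0 ≤ (ξ₀ / ψ₀) / (1 + ξ₀ / ψ₀) := by positivity
  have hmul : (ξ₀ / ψ₀) / (1 + ξ₀ / ψ₀) * (2 - ξ₀ / ξ - ψ / ψ₀) ≤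
      (ξ₀ / ψ₀) / (1 + ξ₀ / ψ₀) * (2 * (1 - s)) :=
    mul_le_mul_of_nonneg_left hamgm ht
  rw [hxy]
  calc Real.log (1 + ξ₀ / ψ₀) + (ξ₀ / ψ₀) / (1 + ξ₀ / ψ₀) * (2 - ξ₀ / ξ - ψ / ψ₀)
      ≤ Real.log (1 + ξ₀ / ψ₀) + 2 * ((ξ₀ / ψ₀) / (1 + ξ₀ / ψ₀)) * (1 - s) := by
        linarith [hmul]
    _ ≤ Real.log (1 + (ξ₀ / ψ₀) / s ^ 2) := hkey
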